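/- arXiv:1906.05926 — 7 statements merged into one kernel-verified Lean document; each statement's English description precedes it below -/
import Mathlib

section
/- Given L, r_min, M, δ > 0 with L < r_min, there exist unique G, H, q, p > 0 with q > p such that the Lennard-Jones force function F(r) = G/r^q - H/r^p satisfies: F(L) = 0, F attains its absolute minimum at r_min with F(r_min) = -M, and q - p = δ. -/
/-!
Write `F r = (G - H r^δ) / r^q` with `δ = q - p`. The zero at `L` forces `G = H L^δ`, and
`F' r = (p H r^δ - q G) / r^(q+1)` changes sign exactly once, at the root of `p H r^δ = q G`; so
the minimum sits at `rmin` iff `q L^δ = p rmin^δ`. With `q = p + δ` this is linear in `p`, giving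
`p = δ L^δ / (rmin^δ - L^δ)`, and the minimal value `-M` then fixes `H` linearly.
-/

open Real Set

theorem lt_of_hasDerivAt_neg_of_pos {f f' : ℝ → ℝ} {a c r : ℝ} (hac : a < c)
    (hf : ∀ x, a < x → HasDerivAt f (f' x) x) (hneg : ∀ x, a < x → x < c → f' x < 0)
    (hpos : ∀ x, c < x → 0 < f' x) (har : a < r) (hrc : r ≠ c) : f c < f r := by
  have hcont : ∀ x, a < x → ContinuousAt f x := fun x hx => (hf x hx).continuousAt
  rcases hrc.lt_or_gt with hlt | hgt
  · have anti : StrictAntiOn f (Ioc a c) :=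
      strictAntiOn_of_hasDerivWithinAt_neg (convex_Ioc a c)
        (fun x hx => (hcont x hx.1).continuousWithinAt)
        (fun x hx => (hf x (interior_subset hx).1).hasDerivWithinAt)
        (fun x hx => by rw [interior_Ioc] at hx; exact hneg x hx.1 hx.2)
    exact anti ⟨har, hlt.le⟩ ⟨hac, le_rfl⟩ hlt
  · have mono : StrictMonoOn f (Ici c) :=
      strictMonoOn_of_hasDerivWithinAt_pos (convex_Ici c)
        (fun x hx => (hcont x (hac.trans_le hx)).continuousWithinAt)
        (fun x hx => (hf x (hac.trans_le (interior_subset hx))).hasDerivWithinAt)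
        (fun x hx => by rw [interior_Ici] at hx; exact hpos x hx)
    exact mono self_mem_Ici hgt.le hgt

noncomputable def ljForce (G H q p r : ℝ) : ℝ := G / r ^ q - H / r ^ p

section ljForce

variable {G H q p r c : ℝ}

theorem ljForce_eq_div (hr : 0 < r) : ljForce G H q p r = (G - H * r ^ (q - p)) / r ^ q := by
  have hrp := (rpow_pos_of_pos hr p).ne'
  rw [ljForce, rpow_sub hr]
  field_simp

theorem ljForce_zero_iff (hr : 0 < r) : ljForce G H q p r = 0 ↔ G = H * r ^ (q - p) := by
  rw [ljForce_eq_div hr, div_eq_zero_iff, sub_eq_zero, or_iff_left (rpow_pos_of_pos hr q).ne']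

theorem hasDerivAt_ljForce (hr : 0 < r) :
    HasDerivAt (ljForce G H q p) ((p * H * r ^ (q - p) - q * G) / r ^ (q + 1)) r := by
  have hpow : ∀ s, HasDerivAt (fun x : ℝ => x ^ (-s)) (-s * r ^ (-s - 1)) r := fun s =>
    hasDerivAt_rpow_const (Or.inl hr.ne')
  have hsum := ((hpow q).const_mul G).sub ((hpow p).const_mul H)
  refine (hsum.congr_of_eventuallyEq ?_).congr_deriv ?_
  · filter_upwards [Ioi_mem_nhds hr] with x hx
    simp only [ljForce, Pi.sub_apply, rpow_neg hx.le, div_eq_mul_inv]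
  · have e1 : r ^ (-q - 1) = (r ^ (q + 1))⁻¹ := by rw [← rpow_neg hr.le]; ring_nf
    have e2 : r ^ (-p - 1) = r ^ (q - p) * r ^ (-q - 1) := by rw [← rpow_add hr]; ring_nf
    rw [e2, e1]
    field_simp
    ring

theorem ljForce_lt_of_crit (hH : 0 < H) (hp : 0 < p) (hpq : p < q) (hc : 0 < c)
    (hcrit : q * G = p * H * c ^ (q - p)) (hr : 0 < r) (hrc : r ≠ c) :
    ljForce G H q p c < ljForce G H q p r := by
  have hderiv : ∀ x, 0 < x → (p * H * x ^ (q - p) - q * G) / x ^ (q + 1)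
      = p * H * (x ^ (q - p) - c ^ (q - p)) / x ^ (q + 1) := fun x _ => by
    rw [hcrit]; ring
  refine lt_of_hasDerivAt_neg_of_pos hc (fun x hx => hasDerivAt_ljForce hx)
    (fun x hx hxc => ?_) (fun x hcx => ?_) hr hrc
  · rw [hderiv x hx]
    refine div_neg_of_neg_of_pos (mul_neg_of_pos_of_neg (by positivity) ?_) (by positivity)
    exact sub_neg.2 (rpow_lt_rpow hx.le hxc (sub_pos.2 hpq))
  · rw [hderiv x (hc.trans hcx)]
    have hx := hc.trans hcx
    refine div_pos (mul_pos (by positivity) ?_) (by positivity)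
    exact sub_pos.2 (rpow_lt_rpow hc.le hcx (sub_pos.2 hpq))

theorem crit_of_forall_ljForce_le (hc : 0 < c)
    (hmin : ∀ r, 0 < r → ljForce G H q p c ≤ ljForce G H q p r) :
    q * G = p * H * c ^ (q - p) := by
  have hloc : IsLocalMin (ljForce G H q p) c :=
    Filter.eventually_of_mem (Ioi_mem_nhds hc) hmin
  have h := hloc.hasDerivAt_eq_zero (hasDerivAt_ljForce hc)
  rw [div_eq_zero_iff, sub_eq_zero, or_iff_left (rpow_pos_of_pos hc _).ne'] at h
  linarith

theorem ljForce_zero_and_strict_min_iff {z m : ℝ} (hH : 0 < H) (hp : 0 < p) (hpq : p < q)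
    (hz : 0 < z) (hc : 0 < c) :
    (ljForce G H q p z = 0 ∧ ljForce G H q p c = -m ∧
        (∀ r, 0 < r → ljForce G H q p c ≤ ljForce G H q p r) ∧
        (∀ r, 0 < r → ljForce G H q p r = ljForce G H q p c → r = c)) ↔
      (G = H * z ^ (q - p) ∧ q * G = p * H * c ^ (q - p) ∧
        G - H * c ^ (q - p) = -m * c ^ q) := by
  have hval : ljForce G H q p c = -m ↔ G - H * c ^ (q - p) = -m * c ^ q := by
    rw [ljForce_eq_div hc, div_eq_iff (rpow_pos_of_pos hc q).ne']
  rw [ljForce_zero_iff hz, hval]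
  constructor
  · rintro ⟨hzero, hval, hmin, -⟩
    exact ⟨hzero, crit_of_forall_ljForce_le hc hmin, hval⟩
  · rintro ⟨hzero, hcrit, hval⟩
    have hlt : ∀ r, 0 < r → r ≠ c → ljForce G H q p c < ljForce G H q p r :=
      fun r hr hrc => ljForce_lt_of_crit hH hp hpq hc hcrit hr hrc
    refine ⟨hzero, hval, fun r hr => ?_, fun r hr hFr => ?_⟩
    · rcases eq_or_ne r c with rfl | hrc
      exacts [le_rfl, (hlt r hr hrc).le]
    · by_contra hrc
      exact (hlt r hr hrc).ne' hFr

end ljForce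

theorem lj_system_iff {G H p q δ A B M R : ℝ} (hH : H ≠ 0) (hqp : q - p = δ) :
    (G = H * B ∧ q * G = p * H * A ∧ G - H * A = -M * R) ↔
      (G = H * B ∧ p * (A - B) = δ * B ∧ H * (A - B) = M * R) := by
  constructor
  · rintro ⟨rfl, hcrit, hval⟩
    refine ⟨rfl, mul_left_cancel₀ hH ?_, by linear_combination -hval⟩
    linear_combination H * B * hqp - hcrit
  · rintro ⟨rfl, hp, hN⟩
    exact ⟨rfl, by linear_combination H * B * hqp - H * hp, by linear_combination -hN⟩

theorem ljf_reparam_exists_unique (L rmin M δ : ℝ) (hL : 0 < L) (hrmin : 0 < rmin)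
    (hM : 0 < M) (hδ : 0 < δ) (hLr : L < rmin) :
    ∃! GHqp : ℝ × ℝ × ℝ × ℝ,
      0 < GHqp.1 ∧ 0 < GHqp.2.1 ∧ 0 < GHqp.2.2.1 ∧ 0 < GHqp.2.2.2 ∧
      GHqp.2.2.2 < GHqp.2.2.1 ∧
      (let F : ℝ → ℝ := fun r => GHqp.1 / r ^ GHqp.2.2.1 - GHqp.2.1 / r ^ GHqp.2.2.2
       F L = 0 ∧ F rmin = -M ∧ (∀ r : ℝ, 0 < r → F rmin ≤ F r) ∧
         (∀ r : ℝ, 0 < r → F r = F rmin → r = rmin) ∧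
         GHqp.2.2.1 - GHqp.2.2.2 = δ) := by
  set B := L ^ δ
  set A := rmin ^ δ
  have hAB : 0 < A - B := sub_pos.2 (rpow_lt_rpow hL.le hLr hδ)
  set p := δ * B / (A - B)
  set q := p + δ
  set H := M * rmin ^ q / (A - B)
  have hp : 0 < p := by positivity
  have hH : 0 < H := by positivity
  have hpq : p < q := lt_add_of_pos_right p hδ
  have hqp : q - p = δ := add_sub_cancel_left p δ
  refine ⟨(H * B, H, q, p), ⟨by positivity, hH, by positivity, hp, hpq, ?_⟩, ?_⟩
  · have hsys := (lj_system_iff hH.ne' hqp).2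
      ⟨rfl, div_mul_cancel₀ _ hAB.ne', div_mul_cancel₀ _ hAB.ne'⟩
    obtain ⟨hzero, hval, hmin, huniq⟩ :=
      (ljForce_zero_and_strict_min_iff hH hp hpq hL hrmin).2
        (by rw [hqp]; exact hsys)
    exact ⟨hzero, hval, hmin, huniq, hqp⟩
  · rintro ⟨G', H', q', p'⟩ ⟨-, hH', -, hp', hpq', hzero, hval, hmin, huniq, hqp'⟩
    have hsys := (ljForce_zero_and_strict_min_iff (G := G') (H := H') (q := q') (p := p')
      hH' hp' hpq' hL hrmin).1 ⟨hzero, hval, hmin, huniq⟩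
    dsimp only at hH' hqp'
    rw [hqp', lj_system_iff hH'.ne' hqp'] at hsys
    obtain ⟨hG', hpAB, hHAB⟩ := hsys
    have hpp : p' = p := eq_div_of_mul_eq hAB.ne' hpAB
    have hqq : q' = q := by linarith
    have hHH : H' = H := by rw [hqq] at hHAB; exact eq_div_of_mul_eq hAB.ne' hHAB
    rw [hG', hpp, hqq, hHH]
end

section
/- For all real a, b > 0, the inequality (e^{a+b} - 1)·a·b > (e^a - 1)(e^b - 1)(a + b) holds. -/
open Real

lemma pos_of_deriv_aux (f f' : ℝ → ℝ) (hd : ∀ x, HasDerivAt f (f' x) x)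
    (hpos : ∀ x, 0 < x → 0 < f' x) (h0 : f 0 = 0) : ∀ x, 0 < x → 0 < f x := by
  intro x hx
  have hm : StrictMonoOn f (Set.Ici 0) := by
    apply strictMonoOn_of_deriv_pos (convex_Ici 0)
    · exact fun y _ => (hd y).continuousAt.continuousWithinAt
    · intro y hy
      rw [interior_Ici] at hy
      rw [(hd y).deriv]
      exact hpos y hy
  have := hm Set.self_mem_Ici (Set.mem_Ici.mpr hx.le) hx
  simpa [h0] using this

lemma chi_pos : ∀ a : ℝ, 0 < a → 0 < a * Real.exp a - Real.exp a + 1 := by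
  apply pos_of_deriv_aux _ (fun a => a * Real.exp a)
  · intro x
    have h1 : HasDerivAt (fun a : ℝ => a * Real.exp a) (Real.exp x + x * Real.exp x) x := by
      simpa using (hasDerivAt_id x).fun_mul (Real.hasDerivAt_exp x)
    have := (h1.fun_sub (Real.hasDerivAt_exp x)).add_const 1
    convert this using 1
    · rfl
    · rfl
    try simp only [id_eq]
    ring
  · intro x hx; positivity
  · simp

lemma psi_pos : ∀ a : ℝ, 0 < a → 0 < (a - 2) * Real.exp a + a + 2 := by
  apply pos_of_deriv_aux _ (fun a => a * Real.exp a - Real.exp a + 1)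
  · intro x
    have h1 : HasDerivAt (fun a : ℝ => (a - 2) * Real.exp a)
        (Real.exp x + (x - 2) * Real.exp x) x := by
      simpa using ((hasDerivAt_id x).sub_const 2).fun_mul (Real.hasDerivAt_exp x)
    have := (h1.fun_add (hasDerivAt_id x)).add_const 2
    convert this using 1
    · rfl
    · rfl
    try simp only [id_eq]
    ring
  · exact chi_pos
  · simp

theorem exp_key_inequality (a b : ℝ) (ha : 0 < a) (hb : 0 < b) :
    (Real.exp (a + b) - 1) * a * b > (Real.exp a - 1) * (Real.exp b - 1) * (a + b) := by
  have hexp : ∀ x : ℝ, HasDerivAt (fun t : ℝ => Real.exp (a + t)) (Real.exp (a + x)) x := by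
    intro x
    simpa using ((hasDerivAt_id x).const_add a).exp
  -- f2 is the derivative (in b) of the difference, f3 is the derivative of f2
  set f2 : ℝ → ℝ := fun t => a * t * Real.exp (a + t) + a * (Real.exp (a + t) - 1)
      - (Real.exp a - 1) * ((a + t) * Real.exp t + (Real.exp t - 1)) with hf2
  have hd2 : ∀ x, HasDerivAt f2
      (a * Real.exp (a + x) * (x + 2) - (Real.exp a - 1) * Real.exp x * (a + x + 2)) x := by
    intro x
    have h1 : HasDerivAt (fun t : ℝ => a * t * Real.exp (a + t))
        (a * Real.exp (a + x) + a * x * Real.exp (a + x)) x := by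
      have := (((hasDerivAt_id x).const_mul a).fun_mul (hexp x))
      convert this using 1
      · rfl
      · rfl
      · rfl
      try simp only [id_eq]
      ring
    have h2 : HasDerivAt (fun t : ℝ => a * (Real.exp (a + t) - 1))
        (a * Real.exp (a + x)) x := by
      simpa using ((hexp x).sub_const 1).const_mul a
    have h3 : HasDerivAt (fun t : ℝ => (Real.exp a - 1) * ((a + t) * Real.exp t + (Real.exp t - 1)))
        ((Real.exp a - 1) * (Real.exp x + (a + x) * Real.exp x + Real.exp x)) x := by
      have hA : HasDerivAt (fun t : ℝ => (a + t) * Real.exp t)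
          (Real.exp x + (a + x) * Real.exp x) x := by
        have := ((hasDerivAt_id x).const_add a).fun_mul (Real.hasDerivAt_exp x)
        convert this using 1
        · rfl
        · rfl
        · rfl
        try simp only [id_eq]
        ring
      simpa using (hA.fun_add ((Real.hasDerivAt_exp x).sub_const 1)).const_mul (Real.exp a - 1)
    have := (h1.fun_add h2).fun_sub h3
    convert this using 1
    · rfl
    · rfl
    try simp only [id_eq]
    ring
  have hf2pos : ∀ x, 0 < x → 0 < f2 x := by
    apply pos_of_deriv_aux _
      (fun x => a * Real.exp (a + x) * (x + 2) - (Real.exp a - 1) * Real.exp x * (a + x + 2))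
    · exact hd2
    · intro x hx
      have hχ := chi_pos a ha
      have hψ := psi_pos a ha
      have hex : Real.exp (a + x) = Real.exp a * Real.exp x := Real.exp_add a x
      have hexp_pos : (0:ℝ) < Real.exp x := Real.exp_pos x
      have key : a * Real.exp (a + x) * (x + 2) - (Real.exp a - 1) * Real.exp x * (a + x + 2)
          = Real.exp x * (x * (a * Real.exp a - Real.exp a + 1) + ((a - 2) * Real.exp a + a + 2)) := by
        rw [hex]; ring
      rw [key]
      have : 0 < x * (a * Real.exp a - Real.exp a + 1) := mul_pos hx hχ
      positivity
    · rw [hf2]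
      simp only [Real.exp_zero]
      ring
  have hd1 : ∀ x, HasDerivAt (fun t : ℝ =>
      (Real.exp (a + t) - 1) * a * t - (Real.exp a - 1) * (Real.exp t - 1) * (a + t)) (f2 x) x := by
    intro x
    have h1 : HasDerivAt (fun t : ℝ => (Real.exp (a + t) - 1) * a * t)
        (Real.exp (a + x) * a * x + (Real.exp (a + x) - 1) * a) x := by
      have := (((hexp x).sub_const 1).mul_const a).fun_mul (hasDerivAt_id x)
      convert this using 1
      · rfl
      · rfl
      · rfl
      try simp only [id_eq]
      ring
    have h2 : HasDerivAt (fun t : ℝ => (Real.exp a - 1) * (Real.exp t - 1) * (a + t))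
        ((Real.exp a - 1) * Real.exp x * (a + x) + (Real.exp a - 1) * (Real.exp x - 1)) x := by
      have := ((((Real.hasDerivAt_exp x).sub_const 1).const_mul (Real.exp a - 1)).fun_mul
        ((hasDerivAt_id x).const_add a))
      convert this using 1
      · rfl
      · rfl
      · rfl
      try simp only [id_eq]
      ring
    have := h1.fun_sub h2
    convert this using 1
    · rfl
    · rfl
    rw [hf2]
    try simp only [id_eq]
    ring
  have main : ∀ x, 0 < x →
      0 < (Real.exp (a + x) - 1) * a * x - (Real.exp a - 1) * (Real.exp x - 1) * (a + x) := by
    apply pos_of_deriv_aux _ f2 hd1 hf2pos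
    simp
  have := main b hb
  linarith
end

section
/- For all real a, b > 0, the series identity holds: (e^{a+b} - 1)ab - (e^a - 1)(e^b - 1)(a+b) = (a+b)·a·b · Σ_{n=1}^∞ Σ_{m=0}^{n-1} [m(n-m-1) / (n·(m+1)!·(n-m)!)] · a^m b^{n-m-1}, and each coefficient m(n-m-1)/(n(m+1)!(n-m)!) is nonnegative. -/
/-! With `φ x = ∑ xⁿ/(n+1)!` we have `eˣ - 1 = x φ x`, so the left side is `(a+b)ab (φ(a+b) - φ a φ b)`.
Expanding `φ(a+b)` binomially and `φ a φ b` as a Cauchy product, the coefficient of `aᵐbⁿ⁻ᵐ` is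
`C(n,m)/(n+1)! - 1/((m+1)!(n-m+1)!)`, and `(m+1)(n-m+1) - (n+1) = m(n-m)`. -/

open Real Finset
open scoped Nat

lemma summable_norm_pow_div_factorial_succ (x : ℝ) :
    Summable fun n : ℕ => ‖x ^ n / (n + 1)!‖ :=
  (summable_pow_div_factorial |x|).of_nonneg_of_le (fun _ => norm_nonneg _) fun n => by
    rw [norm_div, norm_pow, norm_eq_abs, RCLike.norm_natCast]
    gcongr
    exact n.le_succ

lemma exp_sub_one_eq_mul_tsum_pow_div_factorial_succ (x : ℝ) :
    exp x - 1 = x * ∑' n : ℕ, x ^ n / (n + 1)! := by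
  rw [exp_eq_exp_ℝ, NormedSpace.exp_eq_tsum_div]
  beta_reduce
  rw [(summable_pow_div_factorial x).tsum_eq_zero_add, ← tsum_mul_left]
  simp [pow_succ, mul_div_assoc, mul_comm]

lemma choose_div_factorial_succ_sub_inv {n m : ℕ} (hm : m ≤ n) :
    (n.choose m : ℝ) / (n + 1)! - 1 / ((m + 1)! * (n + 1 - m)!) =
      ((m * (n - m) : ℕ) : ℝ) / ((n + 1) * (m + 1)! * (n + 1 - m)!) := by
  obtain ⟨k, rfl⟩ := Nat.exists_eq_add_of_le hm
  rw [Nat.cast_choose ℝ hm, show m + k + 1 - m = k + 1 by omega, Nat.add_sub_cancel_left]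
  push_cast [Nat.factorial_succ]
  field_simp
  ring

lemma tsum_pow_div_factorial_succ_add_sub_mul (a b : ℝ) :
    (∑' n : ℕ, (a + b) ^ n / (n + 1)!) -
        (∑' n : ℕ, a ^ n / (n + 1)!) * ∑' n : ℕ, b ^ n / (n + 1)! =
      ∑' n : ℕ, ∑ m ∈ range (n + 1),
        ((m * (n - m) : ℕ) : ℝ) / ((n + 1) * (m + 1)! * (n + 1 - m)!) * a ^ m * b ^ (n - m) := by
  have ha := summable_norm_pow_div_factorial_succ a
  have hb := summable_norm_pow_div_factorial_succ b
  rw [tsum_mul_tsum_eq_tsum_sum_range_of_summable_norm ha hb,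
    ← (summable_norm_pow_div_factorial_succ (a + b)).of_norm.tsum_sub
      (summable_norm_sum_mul_range_of_summable_norm ha hb).of_norm]
  refine tsum_congr fun n => ?_
  rw [add_pow, sum_div, ← sum_sub_distrib]
  refine sum_congr rfl fun m hm => ?_
  have hmn : m ≤ n := Nat.lt_succ_iff.mp (mem_range.mp hm)
  rw [← choose_div_factorial_succ_sub_inv hmn, show n + 1 - m = n - m + 1 by omega]
  ring

theorem exp_key_series_identity_general (a b : ℝ) :
    ((Real.exp (a + b) - 1) * a * b - (Real.exp a - 1) * (Real.exp b - 1) * (a + b) =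
      (a + b) * a * b *
        ∑' n : ℕ, ∑ m ∈ Finset.range (n + 1),
          ((m * (n - m) : ℕ) : ℝ) /
            ((n + 1) * (Nat.factorial (m + 1)) * (Nat.factorial (n + 1 - m))) *
            a ^ m * b ^ (n - m)) ∧
    ∀ n : ℕ, ∀ m ∈ Finset.range (n + 1),
      0 ≤ ((m * (n - m) : ℕ) : ℝ) /
        ((n + 1) * (Nat.factorial (m + 1)) * (Nat.factorial (n + 1 - m))) := by
  refine ⟨?_, fun n m _ => by positivity⟩
  rw [← tsum_pow_div_factorial_succ_add_sub_mul, exp_sub_one_eq_mul_tsum_pow_div_factorial_succ,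
    exp_sub_one_eq_mul_tsum_pow_div_factorial_succ a, exp_sub_one_eq_mul_tsum_pow_div_factorial_succ b]
  ring

theorem exp_key_series_identity (a b : ℝ) (ha : 0 < a) (hb : 0 < b) :
    ((Real.exp (a + b) - 1) * a * b - (Real.exp a - 1) * (Real.exp b - 1) * (a + b) =
      (a + b) * a * b *
        ∑' n : ℕ, ∑ m ∈ Finset.range (n + 1),
          ((m * (n - m) : ℕ) : ℝ) /
            ((n + 1) * (Nat.factorial (m + 1)) * (Nat.factorial (n + 1 - m))) *
            a ^ m * b ^ (n - m)) ∧
    ∀ n : ℕ, ∀ m ∈ Finset.range (n + 1),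
      0 ≤ ((m * (n - m) : ℕ) : ℝ) /
        ((n + 1) * (Nat.factorial (m + 1)) * (Nat.factorial (n + 1 - m))) :=
  exp_key_series_identity_general a b
end

section
/- Fix L, r_min, M > 0 with L < r_min, and for δ > 0 let F_δ(r) = M (r_min/r)^{δ/((r_min/L)^δ - 1)} ((L/r)^δ - 1)/(1 - (L/r_min)^δ). Then for every fixed r > r_min, the function δ ↦ F_δ(r) is strictly decreasing on (0,∞). -/
open Real Set

noncomputable def lphi (t : ℝ) : ℝ := t / (Real.exp t - 1)
noncomputable def lphi' (t : ℝ) : ℝ :=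
  ((Real.exp t - 1) - t * Real.exp t) / (Real.exp t - 1) ^ 2

lemma exp_sub_one_pos {t : ℝ} (ht : 0 < t) : 0 < Real.exp t - 1 := by
  have := Real.one_lt_exp_iff.mpr ht; linarith

lemma hasDerivAt_lphi {t : ℝ} (ht : 0 < t) : HasDerivAt lphi (lphi' t) t := by
  have hne : Real.exp t - 1 ≠ 0 := ne_of_gt (exp_sub_one_pos ht)
  have h1 : HasDerivAt (fun u : ℝ => u) 1 t := hasDerivAt_id t
  have h2 : HasDerivAt (fun u : ℝ => Real.exp u - 1) (Real.exp t) t :=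
    (Real.hasDerivAt_exp t).sub_const 1
  have := h1.div h2 hne
  refine this.congr_deriv ?_
  unfold lphi'
  ring

lemma hasDerivAt_lphi' {t : ℝ} (ht : 0 < t) :
    HasDerivAt lphi'
      (Real.exp t * ((t - 2) * Real.exp t + t + 2) / (Real.exp t - 1) ^ 3) t := by
  have hpos := exp_sub_one_pos ht
  have hne : Real.exp t - 1 ≠ 0 := ne_of_gt hpos
  have hne2 : (Real.exp t - 1) ^ 2 ≠ 0 := pow_ne_zero _ hne
  have hN : HasDerivAt (fun u : ℝ => (Real.exp u - 1) - u * Real.exp u)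
      (-(t * Real.exp t)) t := by
    have hA : HasDerivAt (fun u : ℝ => Real.exp u - 1) (Real.exp t) t :=
      (Real.hasDerivAt_exp t).sub_const 1
    have hB : HasDerivAt (fun u : ℝ => u * Real.exp u)
        (1 * Real.exp t + t * Real.exp t) t :=
      (hasDerivAt_id t).mul (Real.hasDerivAt_exp t)
    exact (hA.sub hB).congr_deriv (by ring)
  have hD : HasDerivAt (fun u : ℝ => (Real.exp u - 1) ^ 2)
      (2 * (Real.exp t - 1) * Real.exp t) t := by
    have hA : HasDerivAt (fun u : ℝ => Real.exp u - 1) (Real.exp t) t :=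
      (Real.hasDerivAt_exp t).sub_const 1
    have := hA.pow 2
    exact this.congr_deriv (by ring)
  have := hN.div hD hne2
  refine this.congr_deriv ?_
  field_simp
  ring

lemma aux_pos {t : ℝ} (ht : 0 < t) : 0 < (t - 2) * Real.exp t + t + 2 := by
  -- h1 u = (u-1) exp u + 1 > 0 for u > 0
  have h1pos : ∀ u : ℝ, 0 < u → 0 < (u - 1) * Real.exp u + 1 := by
    intro u hu
    have hmono : StrictMonoOn (fun v : ℝ => (v - 1) * Real.exp v + 1) (Ici 0) := by
      apply strictMonoOn_of_deriv_pos (convex_Ici 0)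
      · fun_prop
      · intro x hx
        rw [interior_Ici] at hx
        have hd : HasDerivAt (fun v : ℝ => (v - 1) * Real.exp v + 1)
            (x * Real.exp x) x := by
          have := (((hasDerivAt_id x).sub_const 1).mul (Real.hasDerivAt_exp x)).add_const 1
          exact this.congr_deriv (by simp only [id_eq]; ring)
        rw [hd.deriv]
        exact mul_pos hx (Real.exp_pos x)
    have := hmono (mem_Ici.mpr (le_refl 0)) (mem_Ici.mpr (le_of_lt hu)) hu
    simpa using this
  have hmono : StrictMonoOn (fun v : ℝ => (v - 2) * Real.exp v + v + 2) (Ici 0) := by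
    apply strictMonoOn_of_deriv_pos (convex_Ici 0)
    · fun_prop
    · intro x hx
      rw [interior_Ici] at hx
      have hd : HasDerivAt (fun v : ℝ => (v - 2) * Real.exp v + v + 2)
          ((x - 1) * Real.exp x + 1) x := by
        have := ((((hasDerivAt_id x).sub_const 2).mul (Real.hasDerivAt_exp x)).add
          (hasDerivAt_id x)).add_const 2
        exact this.congr_deriv (by simp only [id_eq]; ring)
      rw [hd.deriv]
      exact h1pos x hx
  have := hmono (mem_Ici.mpr (le_refl 0)) (mem_Ici.mpr (le_of_lt ht)) ht
  simpa using this

lemma lphi'_strictMono : StrictMonoOn lphi' (Ioi 0) := by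
  apply strictMonoOn_of_deriv_pos (convex_Ioi 0)
  · intro x hx
    have hne : Real.exp x - 1 ≠ 0 := ne_of_gt (exp_sub_one_pos hx)
    unfold lphi'
    exact ContinuousWithinAt.div
      (Continuous.continuousWithinAt (by continuity))
      (Continuous.continuousWithinAt (by continuity)) (by positivity)
  · intro x hx
    rw [interior_Ioi] at hx
    rw [(hasDerivAt_lphi' hx).deriv]
    exact div_pos (mul_pos (Real.exp_pos x) (aux_pos hx))
      (pow_pos (exp_sub_one_pos hx) 3)

-- tangent line inequality
lemma lphi_tangent {s t : ℝ} (hs : 0 < s) (hst : s < t) :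
    lphi s + (t - s) * lphi' s < lphi t := by
  have hmono : StrictMonoOn (fun u : ℝ => lphi u - lphi' s * u) (Ici s) := by
    apply strictMonoOn_of_deriv_pos (convex_Ici s)
    · apply ContinuousOn.sub
      · apply ContinuousOn.div continuousOn_id (by fun_prop)
        intro x hx
        exact ne_of_gt (exp_sub_one_pos (lt_of_lt_of_le hs hx))
      · fun_prop
    · intro x hx
      rw [interior_Ici] at hx
      have hxpos : 0 < x := lt_trans hs hx
      have hd : HasDerivAt (fun u : ℝ => lphi u - lphi' s * u)
          (lphi' x - lphi' s) x := by
        have := (hasDerivAt_lphi hxpos).sub ((hasDerivAt_id x).const_mul (lphi' s))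
        exact this.congr_deriv (by ring)
      rw [hd.deriv]
      have := lphi'_strictMono (mem_Ioi.mpr hs) (mem_Ioi.mpr hxpos) hx
      linarith
  have := hmono (self_mem_Ici) (mem_Ici.mpr (le_of_lt hst)) hst
  simp only at this
  nlinarith [this]

lemma one_sub_exp_pos {u δ : ℝ} (hu : 0 < u) (hδ : 0 < δ) :
    0 < 1 - Real.exp (-(u * δ)) := by
  have : Real.exp (-(u * δ)) < 1 := Real.exp_lt_one_iff.mpr (by nlinarith)
  linarith

lemma G_aux {u δ : ℝ} (hu : 0 < u) (hδ : 0 < δ) :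
    (u * Real.exp (-(u * δ))) / (1 - Real.exp (-(u * δ))) = lphi (u * δ) / δ := by
  have h1 : 0 < u * δ := mul_pos hu hδ
  have h2 : (0:ℝ) < Real.exp (u * δ) - 1 := exp_sub_one_pos h1
  have h3 : 0 < 1 - Real.exp (-(u * δ)) := one_sub_exp_pos hu hδ
  unfold lphi
  rw [Real.exp_neg] at *
  have he : Real.exp (u * δ) ≠ 0 := (Real.exp_pos _).ne'
  field_simp

lemma G_strictMono (β γ : ℝ) (hγ : 0 < γ) (hβγ : γ < β) :
    StrictMonoOn (fun δ : ℝ => (γ - β) / γ * lphi (γ * δ)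
      + Real.log (1 - Real.exp (-(β * δ))) - Real.log (1 - Real.exp (-(γ * δ))))
      (Ioi 0) := by
  have hβ : 0 < β := hγ.trans hβγ
  apply strictMonoOn_of_deriv_pos (convex_Ioi 0)
  · apply ContinuousOn.sub
    apply ContinuousOn.add
    · apply continuousOn_const.mul
      simp only [lphi]
      exact ContinuousOn.div (Continuous.continuousOn (by continuity))
        (Continuous.continuousOn (by continuity))
        (fun x hx => ne_of_gt (exp_sub_one_pos (mul_pos hγ hx)))
    · apply ContinuousOn.log (Continuous.continuousOn (by continuity))
      exact fun x hx => ne_of_gt (one_sub_exp_pos hβ hx)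
    · apply ContinuousOn.log (Continuous.continuousOn (by continuity))
      exact fun x hx => ne_of_gt (one_sub_exp_pos hγ hx)
  · intro δ hδ
    rw [interior_Ioi] at hδ
    have hγδ : 0 < γ * δ := mul_pos hγ hδ
    have hβδ : 0 < β * δ := mul_pos hβ hδ
    have h1β : 0 < 1 - Real.exp (-(β * δ)) := one_sub_exp_pos hβ hδ
    have h1γ : 0 < 1 - Real.exp (-(γ * δ)) := one_sub_exp_pos hγ hδ
    -- derivative pieces
    have hinβ : HasDerivAt (fun x : ℝ => 1 - Real.exp (-(β * x)))
        (β * Real.exp (-(β * δ))) δ := by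
      have h : HasDerivAt (fun x : ℝ => -(β * x)) (-β) δ := by
        exact (((hasDerivAt_id δ).const_mul β).neg).congr_deriv (by ring)
      have := (h.exp).const_sub 1
      exact this.congr_deriv (by ring)
    have hinγ : HasDerivAt (fun x : ℝ => 1 - Real.exp (-(γ * x)))
        (γ * Real.exp (-(γ * δ))) δ := by
      have h : HasDerivAt (fun x : ℝ => -(γ * x)) (-γ) δ := by
        exact (((hasDerivAt_id δ).const_mul γ).neg).congr_deriv (by ring)
      have := (h.exp).const_sub 1
      exact this.congr_deriv (by ring)
    have hd1 : HasDerivAt (fun x : ℝ => (γ - β) / γ * lphi (γ * x))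
        ((γ - β) * lphi' (γ * δ)) δ := by
      have hin : HasDerivAt (fun x : ℝ => γ * x) γ δ := by
        simpa using ((hasDerivAt_id δ).const_mul γ)
      have := ((hasDerivAt_lphi hγδ).comp δ hin).const_mul ((γ - β) / γ)
      refine this.congr_deriv ?_
      field_simp
    have hd2 := (hinβ.log (ne_of_gt h1β))
    have hd3 := (hinγ.log (ne_of_gt h1γ))
    have hD : HasDerivAt (fun δ : ℝ => (γ - β) / γ * lphi (γ * δ)
        + Real.log (1 - Real.exp (-(β * δ))) - Real.log (1 - Real.exp (-(γ * δ))))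
        ((γ - β) * lphi' (γ * δ)
          + (β * Real.exp (-(β * δ))) / (1 - Real.exp (-(β * δ)))
          - (γ * Real.exp (-(γ * δ))) / (1 - Real.exp (-(γ * δ)))) δ :=
      (hd1.add hd2).sub hd3
    rw [hD.deriv]
    rw [G_aux hβ hδ, G_aux hγ hδ]
    have htan := lphi_tangent hγδ (by nlinarith : γ * δ < β * δ)
    have key : (γ - β) * lphi' (γ * δ) + lphi (β * δ) / δ - lphi (γ * δ) / δ
        = ((lphi (β * δ) - (lphi (γ * δ) + (β * δ - γ * δ) * lphi' (γ * δ)))) / δ := by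
      have hδ' : (δ:ℝ) ≠ 0 := ne_of_gt hδ
      rw [eq_div_iff hδ']
      have : lphi (β * δ) / δ * δ = lphi (β * δ) := div_mul_cancel₀ _ hδ'
      have h2 : lphi (γ * δ) / δ * δ = lphi (γ * δ) := div_mul_cancel₀ _ hδ'
      nlinarith [this, h2]
    rw [key]
    exact div_pos (by linarith) hδ

theorem ljf_strictAnti_in_delta (L rmin M : ℝ) (hL : 0 < L) (hrmin : 0 < rmin)
    (hM : 0 < M) (hLr : L < rmin) (r : ℝ) (hr : rmin < r) :
    StrictAntiOn
      (fun δ : ℝ =>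
        M * (rmin / r) ^ (δ / ((rmin / L) ^ δ - 1)) *
          ((L / r) ^ δ - 1) / (1 - (L / rmin) ^ δ))
      (Set.Ioi 0) := by
  have hr0 : 0 < r := hrmin.trans hr
  set β := Real.log (r / L) with hβdef
  set γ := Real.log (rmin / L) with hγdef
  have hγ : 0 < γ := Real.log_pos ((one_lt_div hL).mpr hLr)
  have hβγ : γ < β := Real.log_lt_log (div_pos hrmin hL) (by gcongr)
  have hβ : 0 < β := hγ.trans hβγ
  have hG := G_strictMono β γ hγ hβγ
  have key : ∀ δ ∈ Ioi (0:ℝ),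
      M * (rmin / r) ^ (δ / ((rmin / L) ^ δ - 1)) * ((L / r) ^ δ - 1) /
          (1 - (L / rmin) ^ δ)
        = -M * Real.exp ((γ - β) / γ * lphi (γ * δ)
            + Real.log (1 - Real.exp (-(β * δ))) - Real.log (1 - Real.exp (-(γ * δ)))) := by
    intro δ hδ
    rw [mem_Ioi] at hδ
    have h1β : 0 < 1 - Real.exp (-(β * δ)) := one_sub_exp_pos hβ hδ
    have h1γ : 0 < 1 - Real.exp (-(γ * δ)) := one_sub_exp_pos hγ hδ
    have hE : 0 < Real.exp (γ * δ) - 1 := exp_sub_one_pos (mul_pos hγ hδ)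
    have hlogβ : Real.log (L / r) = -β := by
      rw [hβdef, Real.log_div (ne_of_gt hL) (ne_of_gt hr0),
        Real.log_div (ne_of_gt hr0) (ne_of_gt hL)]
      ring
    have hlogγ : Real.log (L / rmin) = -γ := by
      rw [hγdef, Real.log_div (ne_of_gt hL) (ne_of_gt hrmin),
        Real.log_div (ne_of_gt hrmin) (ne_of_gt hL)]
      ring
    have hlogmr : Real.log (rmin / r) = γ - β := by
      rw [hβdef, hγdef, Real.log_div (ne_of_gt hrmin) (ne_of_gt hr0),
        Real.log_div (ne_of_gt hrmin) (ne_of_gt hL),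
        Real.log_div (ne_of_gt hr0) (ne_of_gt hL)]
      ring
    have e1 : (rmin / L : ℝ) ^ (δ:ℝ) = Real.exp (γ * δ) := by
      rw [Real.rpow_def_of_pos (div_pos hrmin hL)]
    have e2 : (L / r : ℝ) ^ (δ:ℝ) = Real.exp (-(β * δ)) := by
      rw [Real.rpow_def_of_pos (div_pos hL hr0), hlogβ]
      ring_nf
    have e3 : (L / rmin : ℝ) ^ (δ:ℝ) = Real.exp (-(γ * δ)) := by
      rw [Real.rpow_def_of_pos (div_pos hL hrmin), hlogγ]
      ring_nf
    have hexparg : (γ - β) / γ * lphi (γ * δ)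
        = Real.log (rmin / r) * (δ / (Real.exp (γ * δ) - 1)) := by
      rw [hlogmr]
      unfold lphi
      field_simp
    rw [Real.rpow_def_of_pos (div_pos hrmin hr0), e1, e2, e3,
      Real.exp_sub, Real.exp_add, Real.exp_log h1β, Real.exp_log h1γ, hexparg]
    ring
  intro a ha b hb hab
  simp only
  rw [key a ha, key b hb]
  have hlt := hG ha hb hab
  have hexp := Real.exp_lt_exp.mpr hlt
  nlinarith [Real.exp_pos ((γ - β) / γ * lphi (γ * a)
    + Real.log (1 - Real.exp (-(β * a))) - Real.log (1 - Real.exp (-(γ * a))))]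
end

section
/- Fix L, r_min, M > 0 with L < r_min and r > r_min. Then lim_{δ → ∞} F_δ(r) = -M, where F_δ(r) = M (r_min/r)^{δ/((r_min/L)^δ - 1)} ((L/r)^δ - 1)/(1 - (L/r_min)^δ). -/
/-! As `δ → ∞` the exponent `δ / ((r_min / L) ^ δ - 1)` tends to `0`, because an exponential
outgrows `δ`; hence `(r_min / r) ^ (…) → 1`. Since `L / r` and `L / r_min` are in `(0, 1)`, their
`δ`-th powers tend to `0`, so the remaining quotient tends to `(0 - 1) / (1 - 0) = -1`. -/

open Real Filter Set

open scoped Topology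

section

variable {a : ℝ}

lemma tendsto_id_div_rpow_atTop_nhds_zero (ha : 1 < a) :
    Tendsto (fun x : ℝ => x / a ^ x) atTop (𝓝 0) := by
  refine (tendsto_rpow_mul_exp_neg_mul_atTop_nhds_zero 1 (log a) (log_pos ha)).congr fun x => ?_
  rw [rpow_one, rpow_def_of_pos (zero_lt_one.trans ha), neg_mul, exp_neg, div_eq_mul_inv]

lemma tendsto_id_div_rpow_sub_one_atTop_nhds_zero (ha : 1 < a) :
    Tendsto (fun x : ℝ => x / (a ^ x - 1)) atTop (𝓝 0) := by
  have hinv : Tendsto (fun x : ℝ => (a ^ x)⁻¹) atTop (𝓝 0) :=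
    (tendsto_rpow_atTop_of_base_gt_one a ha).inv_tendsto_atTop
  have h := (tendsto_id_div_rpow_atTop_nhds_zero ha).div (hinv.const_sub 1) (by norm_num)
  rw [zero_div] at h
  refine h.congr fun x => ?_
  have hpos : 0 < a ^ x := rpow_pos_of_pos (zero_lt_one.trans ha) x
  rw [Pi.div_apply, div_div, mul_sub, mul_one, mul_inv_cancel₀ hpos.ne']

lemma tendsto_rpow_div_rpow_sub_one_atTop_nhds_one {b : ℝ} (hb : b ≠ 0) (ha : 1 < a) :
    Tendsto (fun x : ℝ => b ^ (x / (a ^ x - 1))) atTop (𝓝 1) := by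
  simpa using tendsto_const_nhds.rpow (tendsto_id_div_rpow_sub_one_atTop_nhds_zero ha) (Or.inl hb)

end

theorem ljf_limit_delta_atTop_general (L rmin M : ℝ) (hL : 0 < L)
    (hLr : L < rmin) (r : ℝ) (hr : rmin < r) :
    Tendsto
      (fun δ : ℝ =>
        M * (rmin / r) ^ (δ / ((rmin / L) ^ δ - 1)) *
          ((L / r) ^ δ - 1) / (1 - (L / rmin) ^ δ))
      atTop (nhds (-M)) := by
  have hrmin : 0 < rmin := hL.trans hLr
  have hr0 : 0 < r := hrmin.trans hr
  have hexp : Tendsto (fun δ : ℝ => (rmin / r) ^ (δ / ((rmin / L) ^ δ - 1))) atTop (𝓝 1) :=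
    tendsto_rpow_div_rpow_sub_one_atTop_nhds_one (div_pos hrmin hr0).ne' ((one_lt_div hL).2 hLr)
  have hnum : Tendsto (fun δ : ℝ => (L / r) ^ δ - 1) atTop (𝓝 (0 - 1)) :=
    (tendsto_rpow_atTop_of_base_lt_one _ (neg_one_lt_zero.trans (div_pos hL hr0))
      ((div_lt_one hr0).2 (hLr.trans hr))).sub_const 1
  have hden : Tendsto (fun δ : ℝ => 1 - (L / rmin) ^ δ) atTop (𝓝 (1 - 0)) :=
    (tendsto_rpow_atTop_of_base_lt_one _ (neg_one_lt_zero.trans (div_pos hL hrmin))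
      ((div_lt_one hrmin).2 hLr)).const_sub 1
  simpa [Pi.div_def] using ((hexp.const_mul M).mul hnum).div hden (by norm_num)

theorem ljf_limit_delta_atTop (L rmin M : ℝ) (hL : 0 < L) (hrmin : 0 < rmin)
    (hM : 0 < M) (hLr : L < rmin) (r : ℝ) (hr : rmin < r) :
    Tendsto
      (fun δ : ℝ =>
        M * (rmin / r) ^ (δ / ((rmin / L) ^ δ - 1)) *
          ((L / r) ^ δ - 1) / (1 - (L / rmin) ^ δ))
      atTop (nhds (-M)) :=
  ljf_limit_delta_atTop_general L rmin M hL hLr r hr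
end

section
/- Fix L, r_min, M > 0 with L < r_min and r > r_min. Then lim_{δ → 0+} F_δ(r) = -M · (r_min/r)^{1/log(r_min/L)} · log(r/L)/log(r_min/L), where F_δ(r) = M (r_min/r)^{δ/((r_min/L)^δ - 1)} ((L/r)^δ - 1)/(1 - (L/r_min)^δ). -/
/-!
Each δ-dependent piece is a ratio of difference quotients of `δ ↦ b ^ δ` at `0`, and
`(b ^ δ - 1) / δ → log b`. So the exponent `δ / ((rmin / L) ^ δ - 1)` tends to
`1 / log (rmin / L)`, the last factor to `-log (r / L) / log (rmin / L)`, and continuity of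
`rpow` and of products does the rest.
-/

open Real Filter Topology

lemma tendsto_rpow_sub_one_div {b : ℝ} (hb : 0 < b) :
    Tendsto (fun δ : ℝ => (b ^ δ - 1) / δ) (𝓝[≠] 0) (𝓝 (log b)) := by
  have h := hasDerivAt_iff_tendsto_slope.1 (hasStrictDerivAt_const_rpow hb 0).hasDerivAt
  simp only [rpow_zero, one_mul] at h
  refine h.congr fun δ => ?_
  rw [slope_def_field, sub_zero, rpow_zero]

lemma tendsto_div_rpow_sub_one {a : ℝ} (ha : 0 < a) (ha₁ : a ≠ 1) :
    Tendsto (fun δ : ℝ => δ / (a ^ δ - 1)) (𝓝[≠] 0) (𝓝 (1 / log a)) := by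
  simpa only [inv_div, one_div] using
    (tendsto_rpow_sub_one_div ha).inv₀ (log_ne_zero_of_pos_of_ne_one ha ha₁)

lemma tendsto_rpow_sub_one_div_rpow_sub_one {a b : ℝ} (ha : 0 < a) (ha₁ : a ≠ 1) (hb : 0 < b) :
    Tendsto (fun δ : ℝ => (b ^ δ - 1) / (a ^ δ - 1)) (𝓝[≠] 0) (𝓝 (log b / log a)) := by
  refine ((tendsto_rpow_sub_one_div hb).div (tendsto_rpow_sub_one_div ha)
    (log_ne_zero_of_pos_of_ne_one ha ha₁)).congr' ?_
  filter_upwards [self_mem_nhdsWithin] with δ hδ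
  exact div_div_div_cancel_right₀ hδ _ _

theorem ljf_limit_delta_zero_general (L rmin M : ℝ) (hL : 0 < L)
    (hLr : L < rmin) (r : ℝ) (hr : rmin < r) :
    Tendsto
      (fun δ : ℝ =>
        M * (rmin / r) ^ (δ / ((rmin / L) ^ δ - 1)) *
          ((L / r) ^ δ - 1) / (1 - (L / rmin) ^ δ))
      (nhdsWithin 0 (Set.Ioi 0))
      (nhds (-M * (rmin / r) ^ (1 / Real.log (rmin / L)) *
        Real.log (r / L) / Real.log (rmin / L))) := by
  have hrmin : 0 < rmin := hL.trans hLr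
  have hr₀ : 0 < r := hrmin.trans hr
  have hexp := tendsto_div_rpow_sub_one (div_pos hrmin hL) ((one_lt_div hL).2 hLr).ne'
  have hratio := tendsto_rpow_sub_one_div_rpow_sub_one (div_pos hL hrmin)
    (div_lt_one hrmin |>.2 hLr).ne (div_pos hL hr₀)
  have hlim := (tendsto_const_nhds (x := M)).mul
    (tendsto_const_nhds.rpow hexp (Or.inl (div_pos hrmin hr₀).ne')) |>.mul hratio.neg
  have hlog : ∀ x y : ℝ, log (x / y) = -log (y / x) := fun x y => by rw [← log_inv, inv_div]
  convert hlim.mono_left (nhdsGT_le_nhdsNE 0) using 2 with δ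
  · rw [mul_div_assoc, ← neg_sub ((L / rmin) ^ δ), div_neg]
  · rw [hlog L r, hlog L rmin, neg_div_neg_eq]
    ring

theorem ljf_limit_delta_zero (L rmin M : ℝ) (hL : 0 < L) (hrmin : 0 < rmin)
    (hM : 0 < M) (hLr : L < rmin) (r : ℝ) (hr : rmin < r) :
    Tendsto
      (fun δ : ℝ =>
        M * (rmin / r) ^ (δ / ((rmin / L) ^ δ - 1)) *
          ((L / r) ^ δ - 1) / (1 - (L / rmin) ^ δ))
      (nhdsWithin 0 (Set.Ioi 0))
      (nhds (-M * (rmin / r) ^ (1 / Real.log (rmin / L)) *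
        Real.log (r / L) / Real.log (rmin / L))) :=
  ljf_limit_delta_zero_general L rmin M hL hLr r hr
end

section
/- Fix L, r_min, M > 0 with L < r_min, let ε ∈ (0,1), and let R_ε > r_min be the unique solution of T(R_ε) = ε where T(r) = (r_min/r)^{1/log(r_min/L)} log(r/L)/log(r_min/L). Then for a given r > r_min, there exists δ > 0 with F_δ(r) = -εM if and only if r > R_ε. -/
open Real Set Filter Topology

private lemma LJF_pos1 {x : ℝ} (hx : 0 < x) : 0 < 1 - Real.exp (-x) := by
  have : Real.exp (-x) < 1 := Real.exp_lt_one_iff.mpr (by linarith)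
  linarith

private lemma LJF_pos2 {x : ℝ} (hx : 0 < x) : 0 < Real.exp x - 1 := by
  have : 1 < Real.exp x := Real.one_lt_exp_iff.mpr hx
  linarith

private lemma LJF_sq_exp_lt {x : ℝ} (hx : 0 < x) : x ^ 2 * Real.exp x < (Real.exp x - 1) ^ 2 := by
  have h1 : x / 2 < Real.sinh (x / 2) := Real.self_lt_sinh_iff.mpr (by linarith)
  have h2 : Real.sinh (x / 2) = (Real.exp (x / 2) - Real.exp (-(x / 2))) / 2 := Real.sinh_eq _
  have h3 : Real.exp x - 1 = Real.exp (x / 2) * (Real.exp (x / 2) - Real.exp (-(x / 2))) := by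
    rw [mul_sub, ← Real.exp_add, ← Real.exp_add]; norm_num
  have h4 : Real.exp (x / 2) * x < Real.exp x - 1 := by
    rw [h3]
    have : x < Real.exp (x / 2) - Real.exp (-(x / 2)) := by rw [h2] at h1; linarith
    exact mul_lt_mul_of_pos_left this (Real.exp_pos _)
  have h5 : (0:ℝ) < Real.exp (x / 2) * x := by positivity
  have h6 : Real.exp (x / 2) * Real.exp (x / 2) = Real.exp x := by
    rw [← Real.exp_add]; norm_num
  nlinarith [h4, h5, h6]

private lemma LJF_hasDerivAt_f {δ v : ℝ} (hδ : 0 < δ) (hv : 0 < v) :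
    HasDerivAt (fun w => Real.log (1 - Real.exp (-(w * δ))) - Real.log w)
      (δ / (Real.exp (v * δ) - 1) - 1 / v) v := by
  have h1 : HasDerivAt (fun w : ℝ => -(w * δ)) (-δ) v := by
    simpa [Pi.neg_def] using ((hasDerivAt_id v).mul_const δ).neg
  have h2 : HasDerivAt (fun w => Real.exp (-(w * δ))) (Real.exp (-(v * δ)) * (-δ)) v := h1.exp
  have h3 : HasDerivAt (fun w => 1 - Real.exp (-(w * δ))) (δ * Real.exp (-(v * δ))) v := by
    simpa [mul_comm] using (h2.const_sub 1)
  have hpos : 0 < 1 - Real.exp (-(v * δ)) := LJF_pos1 (by positivity)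
  have h4 := (h3.log (ne_of_gt hpos)).sub (Real.hasDerivAt_log (ne_of_gt hv))
  have key : δ * Real.exp (-(v * δ)) / (1 - Real.exp (-(v * δ))) = δ / (Real.exp (v * δ) - 1) := by
    rw [Real.exp_neg]
    have hE : Real.exp (v * δ) ≠ 0 := (Real.exp_pos _).ne'
    have hE1 : Real.exp (v * δ) - 1 ≠ 0 := (LJF_pos2 (by positivity)).ne'
    field_simp
  rw [key] at h4
  simpa [one_div, Pi.sub_def] using h4

private lemma LJF_hasDerivAt_D {δ v : ℝ} (hδ : 0 < δ) (hv : 0 < v) :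
    HasDerivAt (fun w => δ / (Real.exp (w * δ) - 1) - 1 / w)
      (1 / v ^ 2 - δ ^ 2 * Real.exp (v * δ) / (Real.exp (v * δ) - 1) ^ 2) v := by
  have hE1 : Real.exp (v * δ) - 1 ≠ 0 := (LJF_pos2 (by positivity)).ne'
  have hE : HasDerivAt (fun w : ℝ => Real.exp (w * δ) - 1) (Real.exp (v * δ) * δ) v := by
    simpa using (((hasDerivAt_id v).mul_const δ).exp).sub_const 1
  have h1 : HasDerivAt (fun w => δ / (Real.exp (w * δ) - 1))
      ((0 * (Real.exp (v * δ) - 1) - δ * (Real.exp (v * δ) * δ)) / (Real.exp (v * δ) - 1) ^ 2) v :=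
    (hasDerivAt_const v δ).div hE hE1
  have h2 : HasDerivAt (fun w : ℝ => 1 / w) ((0 * v - 1 * 1) / v ^ 2) v :=
    (hasDerivAt_const v 1).div (hasDerivAt_id v) (ne_of_gt hv)
  have h3 : HasDerivAt (fun w => δ / (Real.exp (w * δ) - 1) - 1 / w) _ v := h1.sub h2
  convert h3 using 1
  field_simp
  ring

private lemma LJF_D_strictMono {δ : ℝ} (hδ : 0 < δ) :
    StrictMonoOn (fun w => δ / (Real.exp (w * δ) - 1) - 1 / w) (Ioi 0) := by
  apply strictMonoOn_of_deriv_pos (convex_Ioi 0)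
  · intro v hv
    exact (LJF_hasDerivAt_D hδ hv).continuousAt.continuousWithinAt
  · intro v hv
    rw [interior_Ioi] at hv
    have hv0 : (0:ℝ) < v := hv
    rw [(LJF_hasDerivAt_D hδ hv0).deriv]
    have hE1 : 0 < Real.exp (v * δ) - 1 := LJF_pos2 (by positivity)
    have key := LJF_sq_exp_lt (x := v * δ) (by positivity)
    rw [sub_pos, div_lt_div_iff₀ (by positivity) (by positivity)]
    nlinarith [key]

private lemma LJF_key_ineq {s u δ : ℝ} (hs : 0 < s) (hsu : s < u) (hδ : 0 < δ) :
    Real.exp ((s - u) * (1 / s)) * u / s <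
      Real.exp ((s - u) * (δ / (Real.exp (s * δ) - 1))) * (1 - Real.exp (-(u * δ))) /
        (1 - Real.exp (-(s * δ))) := by
  have hu : 0 < u := lt_trans hs hsu
  set f : ℝ → ℝ := fun w => Real.log (1 - Real.exp (-(w * δ))) - Real.log w with hf
  set D : ℝ → ℝ := fun w => δ / (Real.exp (w * δ) - 1) - 1 / w with hD
  obtain ⟨ξ, hξ, hξeq⟩ := exists_hasDerivAt_eq_slope f D hsu
    (fun v hv => (LJF_hasDerivAt_f hδ (lt_of_lt_of_le hs hv.1)).continuousAt.continuousWithinAt)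
    (fun v hv => LJF_hasDerivAt_f hδ (lt_trans hs hv.1))
  have hDs : D s < D ξ := LJF_D_strictMono hδ hs (lt_trans hs hξ.1) hξ.1
  have hne : u - s ≠ 0 := sub_ne_zero.mpr hsu.ne'
  have hfu : f u - f s = (u - s) * D ξ := by
    rw [hξeq]; field_simp
  have hineq : (u - s) * D s < f u - f s := by
    rw [hfu]
    exact mul_lt_mul_of_pos_left hDs (by linarith)
  have h1u : 0 < 1 - Real.exp (-(u * δ)) := LJF_pos1 (by positivity)
  have h1s : 0 < 1 - Real.exp (-(s * δ)) := LJF_pos1 (by positivity)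
  have H : (s - u) * (1 / s) + Real.log u - Real.log s <
      (s - u) * (δ / (Real.exp (s * δ) - 1)) + Real.log (1 - Real.exp (-(u * δ))) -
        Real.log (1 - Real.exp (-(s * δ))) := by
    simp only [hf, hD] at hineq
    nlinarith [hineq]
  calc Real.exp ((s - u) * (1 / s)) * u / s
      = Real.exp ((s - u) * (1 / s) + Real.log u - Real.log s) := by
        rw [Real.exp_sub, Real.exp_add, Real.exp_log hu, Real.exp_log hs]
    _ < Real.exp ((s - u) * (δ / (Real.exp (s * δ) - 1)) + Real.log (1 - Real.exp (-(u * δ))) -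
        Real.log (1 - Real.exp (-(s * δ)))) := Real.exp_lt_exp.mpr H
    _ = _ := by
        rw [Real.exp_sub, Real.exp_add, Real.exp_log h1u, Real.exp_log h1s]

private lemma LJF_slope : Tendsto (fun t : ℝ => (Real.exp t - 1) / t) (𝓝[≠] (0:ℝ)) (𝓝 1) := by
  have h := Real.hasDerivAt_exp 0
  rw [hasDerivAt_iff_tendsto_slope] at h
  simpa [slope_fun_def, Real.exp_zero, div_eq_inv_mul] using h

private lemma LJF_aux {k : ℝ} (hk : k ≠ 0) :
    Tendsto (fun δ : ℝ => (Real.exp (k * δ) - 1) / (k * δ)) (𝓝[>] (0:ℝ)) (𝓝 1) := by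
  have hmap : Tendsto (fun δ : ℝ => k * δ) (𝓝[>] (0:ℝ)) (𝓝[≠] (0:ℝ)) := by
    apply tendsto_nhdsWithin_of_tendsto_nhds_of_eventually_within
    · have h0 : Tendsto (fun δ : ℝ => k * δ) (𝓝 (0:ℝ)) (𝓝 (k * 0)) :=
        (continuous_const.mul continuous_id).tendsto 0
      rw [mul_zero] at h0
      exact h0.mono_left nhdsWithin_le_nhds
    · filter_upwards [self_mem_nhdsWithin] with δ hδ
      exact mul_ne_zero hk (ne_of_gt hδ)
  exact LJF_slope.comp hmap

private lemma LJF_tendsto_A {s : ℝ} (hs : 0 < s) :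
    Tendsto (fun δ : ℝ => δ / (Real.exp (s * δ) - 1)) (𝓝[>] (0:ℝ)) (𝓝 (1 / s)) := by
  have h := ((LJF_aux (ne_of_gt hs)).inv₀ one_ne_zero).const_mul (1 / s)
  rw [inv_one, mul_one] at h
  apply h.congr'
  filter_upwards [self_mem_nhdsWithin] with δ hδ
  have hδ0 : (0:ℝ) < δ := hδ
  have h1 : Real.exp (s * δ) - 1 ≠ 0 := (LJF_pos2 (by positivity)).ne'
  field_simp

private lemma LJF_tendsto_B {k : ℝ} (hk : 0 < k) :
    Tendsto (fun δ : ℝ => (1 - Real.exp (-(k * δ))) / δ) (𝓝[>] (0:ℝ)) (𝓝 k) := by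
  have h := (LJF_aux (k := -k) (by linarith)).const_mul k
  rw [mul_one] at h
  apply h.congr'
  filter_upwards [self_mem_nhdsWithin] with δ hδ
  have hδ0 : (0:ℝ) < δ := hδ
  have hδ' : (δ:ℝ) ≠ 0 := ne_of_gt hδ0
  have : -k * δ = -(k * δ) := by ring
  rw [this]
  field_simp
  ring

private lemma LJF_tendsto_zero {s u : ℝ} (hs : 0 < s) (hu : 0 < u) :
    Tendsto (fun δ : ℝ => Real.exp ((s - u) * (δ / (Real.exp (s * δ) - 1))) *
        (1 - Real.exp (-(u * δ))) / (1 - Real.exp (-(s * δ)))) (𝓝[>] (0:ℝ))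
      (𝓝 (Real.exp ((s - u) * (1 / s)) * u / s)) := by
  have hexp : Tendsto (fun δ : ℝ => Real.exp ((s - u) * (δ / (Real.exp (s * δ) - 1))))
      (𝓝[>] (0:ℝ)) (𝓝 (Real.exp ((s - u) * (1 / s)))) :=
    (Real.continuous_exp.tendsto _).comp ((LJF_tendsto_A hs).const_mul (s - u))
  have hnum := LJF_tendsto_B hu
  have hden := LJF_tendsto_B hs
  have h := (hexp.mul hnum).div hden (ne_of_gt hs)
  apply h.congr'
  filter_upwards [self_mem_nhdsWithin] with δ hδ
  have hδ0 : (0:ℝ) < δ := hδ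
  have hδ' : (δ:ℝ) ≠ 0 := ne_of_gt hδ0
  have h1 : 1 - Real.exp (-(s * δ)) ≠ 0 := (LJF_pos1 (by positivity)).ne'
  simp only [Pi.div_apply]
  field_simp

private lemma LJF_tendsto_top {s u : ℝ} (hs : 0 < s) (hu : 0 < u) :
    Tendsto (fun δ : ℝ => Real.exp ((s - u) * (δ / (Real.exp (s * δ) - 1))) *
        (1 - Real.exp (-(u * δ))) / (1 - Real.exp (-(s * δ)))) atTop (𝓝 1) := by
  have hmap : ∀ k : ℝ, 0 < k → Tendsto (fun δ : ℝ => Real.exp (-(k * δ))) atTop (𝓝 0) := by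
    intro k hk
    have : Tendsto (fun δ : ℝ => k * δ) atTop atTop := (tendsto_id.const_mul_atTop hk)
    exact (Real.tendsto_exp_neg_atTop_nhds_zero).comp this
  have hA : Tendsto (fun δ : ℝ => δ / (Real.exp (s * δ) - 1)) atTop (𝓝 0) := by
    have h0 : Tendsto (fun δ : ℝ => (s * δ) ^ 1 * Real.exp (-(s * δ))) atTop (𝓝 0) :=
      (tendsto_pow_mul_exp_neg_atTop_nhds_zero 1).comp (tendsto_id.const_mul_atTop hs)
    have h1 : Tendsto (fun δ : ℝ => δ * Real.exp (-(s * δ))) atTop (𝓝 0) := by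
      have := h0.const_mul (1 / s)
      rw [mul_zero] at this
      apply this.congr'
      filter_upwards [] with δ
      field_simp
    have h2 : Tendsto (fun δ : ℝ => (1 - Real.exp (-(s * δ)))⁻¹) atTop (𝓝 1) := by
      have := ((tendsto_const_nhds (x := (1:ℝ))).sub (hmap s hs)).inv₀ (by norm_num)
      simpa using this
    have h3 := h1.mul h2
    rw [zero_mul] at h3
    apply h3.congr'
    filter_upwards [eventually_gt_atTop (0:ℝ)] with δ hδ
    have h1' : 1 - Real.exp (-(s * δ)) ≠ 0 := (LJF_pos1 (by positivity)).ne'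
    have h2' : Real.exp (s * δ) - 1 ≠ 0 := (LJF_pos2 (by positivity)).ne'
    have hE : Real.exp (s * δ) ≠ 0 := (Real.exp_pos _).ne'
    rw [Real.exp_neg]
    field_simp
  have hexp : Tendsto (fun δ : ℝ => Real.exp ((s - u) * (δ / (Real.exp (s * δ) - 1))))
      atTop (𝓝 1) := by
    have := (Real.continuous_exp.tendsto _).comp (hA.const_mul (s - u))
    simpa [Function.comp_def] using this
  have hnum : Tendsto (fun δ : ℝ => 1 - Real.exp (-(u * δ))) atTop (𝓝 1) := by
    simpa using (tendsto_const_nhds (x := (1:ℝ))).sub (hmap u hu)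
  have hden : Tendsto (fun δ : ℝ => 1 - Real.exp (-(s * δ))) atTop (𝓝 1) := by
    simpa using (tendsto_const_nhds (x := (1:ℝ))).sub (hmap s hs)
  have h := (hexp.mul hnum).div hden (by norm_num)
  simpa [Pi.div_def] using h

private lemma LJF_te_anti {t1 t2 : ℝ} (h1 : 1 ≤ t1) (h12 : t1 < t2) :
    t2 * Real.exp (-t2) < t1 * Real.exp (-t1) := by
  have h := Real.add_one_lt_exp (x := t2 - t1) (by linarith)
  have h2 : t2 < t1 * Real.exp (t2 - t1) := by nlinarith [Real.exp_pos (t2 - t1)]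
  calc t2 * Real.exp (-t2) < (t1 * Real.exp (t2 - t1)) * Real.exp (-t2) :=
        mul_lt_mul_of_pos_right h2 (Real.exp_pos _)
    _ = t1 * Real.exp (-t1) := by rw [mul_assoc, ← Real.exp_add]; ring_nf

private lemma LJF_T_anti {s u1 u2 : ℝ} (hs : 0 < s) (h1 : s ≤ u1) (h12 : u1 < u2) :
    Real.exp ((s - u2) * (1 / s)) * u2 / s < Real.exp ((s - u1) * (1 / s)) * u1 / s := by
  have e1 : ∀ u : ℝ, Real.exp ((s - u) * (1 / s)) * u / s =
      Real.exp 1 * (u / s * Real.exp (-(u / s))) := by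
    intro u
    rw [show (s - u) * (1 / s) = 1 + -(u / s) by field_simp; ring, Real.exp_add]
    ring
  have key : u2 / s * Real.exp (-(u2 / s)) < u1 / s * Real.exp (-(u1 / s)) :=
    LJF_te_anti ((one_le_div hs).mpr h1) (by gcongr)
  rw [e1, e1]
  exact mul_lt_mul_of_pos_left key (Real.exp_pos 1)

private lemma LJF_cont {s u : ℝ} (hs : 0 < s) :
    ContinuousOn (fun δ : ℝ => Real.exp ((s - u) * (δ / (Real.exp (s * δ) - 1))) *
      (1 - Real.exp (-(u * δ))) / (1 - Real.exp (-(s * δ)))) (Ioi 0) := by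
  intro δ hδ
  have hδ0 : (0:ℝ) < δ := hδ
  have hne1 : Real.exp (s * δ) - 1 ≠ 0 := (LJF_pos2 (by positivity)).ne'
  have hne2 : 1 - Real.exp (-(s * δ)) ≠ 0 := (LJF_pos1 (by positivity)).ne'
  apply ContinuousAt.continuousWithinAt
  have cE : Continuous fun δ : ℝ => Real.exp (s * δ) - 1 :=
    (Real.continuous_exp.comp (continuous_const.mul continuous_id)).sub continuous_const
  have c1 : ContinuousAt (fun δ : ℝ => Real.exp ((s - u) * (δ / (Real.exp (s * δ) - 1)))) δ :=
    Real.continuous_exp.continuousAt.comp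
      (continuousAt_const.mul ((continuousAt_id).div cE.continuousAt hne1))
  have c2 : ContinuousAt (fun δ : ℝ => 1 - Real.exp (-(u * δ))) δ :=
    (continuous_const.sub (Real.continuous_exp.comp
      (continuous_const.mul continuous_id).neg)).continuousAt
  have c3 : ContinuousAt (fun δ : ℝ => 1 - Real.exp (-(s * δ))) δ :=
    (continuous_const.sub (Real.continuous_exp.comp
      (continuous_const.mul continuous_id).neg)).continuousAt
  exact (c1.mul c2).div c3 hne2

theorem ljf_attainable_decay (L rmin M ε Rε : ℝ) (hL : 0 < L) (hrmin : 0 < rmin)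
    (hM : 0 < M) (hLr : L < rmin) (hε : ε ∈ Set.Ioo (0 : ℝ) 1) (hRε : rmin < Rε)
    (hTR : (rmin / Rε) ^ (1 / Real.log (rmin / L)) * Real.log (Rε / L) /
      Real.log (rmin / L) = ε)
    (r : ℝ) (hr : rmin < r) :
    (∃ δ : ℝ, 0 < δ ∧
        M * (rmin / r) ^ (δ / ((rmin / L) ^ δ - 1)) *
          ((L / r) ^ δ - 1) / (1 - (L / rmin) ^ δ) = -(ε * M)) ↔
      Rε < r := by
  obtain ⟨hε0, hε1⟩ := hε
  have hr0 : 0 < r := lt_trans hrmin hr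
  have hR0 : 0 < Rε := lt_trans hrmin hRε
  set s := Real.log (rmin / L) with hs_def
  set u := Real.log (r / L) with hu_def
  set uR := Real.log (Rε / L) with huR_def
  have hs : 0 < s := Real.log_pos ((one_lt_div hL).mpr hLr)
  have hsu : s < u := Real.log_lt_log (by positivity) (by gcongr)
  have hsuR : s < uR := Real.log_lt_log (by positivity) (by gcongr)
  have hlogRm : Real.log (rmin / Rε) = s - uR := by
    rw [hs_def, huR_def, Real.log_div hrmin.ne' hR0.ne', Real.log_div hrmin.ne' hL.ne',
      Real.log_div hR0.ne' hL.ne']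
    ring
  have hTR' : Real.exp ((s - uR) * (1 / s)) * uR / s = ε := by
    rw [Real.rpow_def_of_pos (div_pos hrmin hR0), hlogRm] at hTR
    exact hTR
  have hconv : ∀ δ : ℝ, 0 < δ →
      ((M * (rmin / r) ^ (δ / ((rmin / L) ^ δ - 1)) * ((L / r) ^ δ - 1) /
        (1 - (L / rmin) ^ δ) = -(ε * M)) ↔
        Real.exp ((s - u) * (δ / (Real.exp (s * δ) - 1))) * (1 - Real.exp (-(u * δ))) /
          (1 - Real.exp (-(s * δ))) = ε) := by
    intro δ hδ0
    have h1 : (rmin / L) ^ (δ:ℝ) = Real.exp (s * δ) := by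
      rw [Real.rpow_def_of_pos (div_pos hrmin hL), ← hs_def]
    have h2 : (L / r) ^ (δ:ℝ) = Real.exp (-(u * δ)) := by
      rw [Real.rpow_def_of_pos (div_pos hL hr0)]
      congr 1
      rw [Real.log_div hL.ne' hr0.ne', hu_def, Real.log_div hr0.ne' hL.ne']
      ring
    have h3 : (L / rmin) ^ (δ:ℝ) = Real.exp (-(s * δ)) := by
      rw [Real.rpow_def_of_pos (div_pos hL hrmin)]
      congr 1
      rw [Real.log_div hL.ne' hrmin.ne', hs_def, Real.log_div hrmin.ne' hL.ne']
      ring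
    have h4 : (rmin / r) ^ (δ / ((rmin / L) ^ (δ:ℝ) - 1)) =
        Real.exp ((s - u) * (δ / (Real.exp (s * δ) - 1))) := by
      rw [h1, Real.rpow_def_of_pos (div_pos hrmin hr0)]
      congr 1
      rw [Real.log_div hrmin.ne' hr0.ne', hs_def, hu_def, Real.log_div hrmin.ne' hL.ne',
        Real.log_div hr0.ne' hL.ne']
      ring
    rw [h4, h2, h3]
    have hE : M * Real.exp ((s - u) * (δ / (Real.exp (s * δ) - 1))) *
        (Real.exp (-(u * δ)) - 1) / (1 - Real.exp (-(s * δ))) =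
        -(M * (Real.exp ((s - u) * (δ / (Real.exp (s * δ) - 1))) * (1 - Real.exp (-(u * δ))) /
          (1 - Real.exp (-(s * δ))))) := by ring
    rw [hE, neg_inj, mul_comm ε M]
    exact mul_right_inj' hM.ne'
  constructor
  · rintro ⟨δ, hδ0, heq⟩
    rw [hconv δ hδ0] at heq
    have key := LJF_key_ineq hs hsu hδ0
    rw [heq] at key
    by_contra hcon
    push_neg at hcon
    have huuR : u ≤ uR := by
      rw [hu_def, huR_def]
      have := (Real.log_le_log_iff (x := r / L) (y := Rε / L) (by positivity)
        (by positivity)).mpr (by gcongr)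
      exact this
    rcases eq_or_lt_of_le huuR with heq2 | hlt
    · rw [heq2, hTR'] at key
      exact lt_irrefl _ key
    · have h5 := LJF_T_anti hs (le_of_lt hsu) hlt
      rw [hTR'] at h5
      linarith
  · intro hrR
    have huRu : uR < u := Real.log_lt_log (by positivity) (by gcongr)
    have hTu : Real.exp ((s - u) * (1 / s)) * u / s < ε := by
      have h5 := LJF_T_anti hs (le_of_lt hsuR) huRu
      rw [hTR'] at h5
      exact h5
    set G : ℝ → ℝ := fun δ => Real.exp ((s - u) * (δ / (Real.exp (s * δ) - 1))) *
      (1 - Real.exp (-(u * δ))) / (1 - Real.exp (-(s * δ))) with hG_def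
    have hev0 : ∀ᶠ δ in 𝓝[>] (0:ℝ), G δ < ε :=
      (LJF_tendsto_zero hs (lt_trans hs hsu)).eventually_lt_const hTu
    obtain ⟨δ₀, hδ₀lt, hδ₀pos⟩ := (hev0.and self_mem_nhdsWithin).exists
    have hδ₀0 : (0:ℝ) < δ₀ := hδ₀pos
    have hevT : ∀ᶠ δ in atTop, ε < G δ :=
      (LJF_tendsto_top hs (lt_trans hs hsu)).eventually_const_lt hε1
    obtain ⟨δ₁, hδ₁gt, hδ₁big⟩ := (hevT.and (eventually_gt_atTop δ₀)).exists
    have hsub : Icc δ₀ δ₁ ⊆ Ioi 0 := fun x hx => lt_of_lt_of_le hδ₀0 hx.1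
    have hcont := (LJF_cont (u := u) hs).mono hsub
    have hivt := intermediate_value_Icc (le_of_lt hδ₁big) hcont
    have hmem : ε ∈ Icc (G δ₀) (G δ₁) := ⟨le_of_lt hδ₀lt, le_of_lt hδ₁gt⟩
    obtain ⟨δ, hδmem, hGδ⟩ := hivt hmem
    have hδpos : 0 < δ := lt_of_lt_of_le hδ₀0 hδmem.1
    exact ⟨δ, hδpos, (hconv δ hδpos).mpr hGδ⟩
end
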